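/- arXiv:1507.03067 — 6 statements merged into one kernel-verified Lean document; each statement's English description precedes it below -/
import Mathlib

section
/- Let G = (V,E) be a finite simple graph, k a positive integer, and γ a real number with γ ≥ 1 such that γk is a positive integer. If K ⊆ V is a vertex set of γk vertices whose minimum degree within K is at least (γ+1)k/2 (i.e., d_K(v) ≥ (γ+1)k/2 for every v ∈ K), then K is a clique in P^k(G). -/
/-- The closed neighborhood N[v] of a vertex: `{v} ∪ {u : u adjacent to v}`. -/
def closedNbhd {V : Type*} (G : SimpleGraph V) (v : V) : Set V :=
  insert v (G.neighborSet v)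

/-- The k-intersection polishing P^k(G): distinct u, v are adjacent iff |N[u] ∩ N[v]| ≥ k. -/
def polish {V : Type*} (k : ℕ) (G : SimpleGraph V) : SimpleGraph V where
  Adj u v := u ≠ v ∧ k ≤ (closedNbhd G u ∩ closedNbhd G v).ncard
  symm := by
    constructor
    rintro u v ⟨h1, h2⟩
    exact ⟨h1.symm, by rwa [Set.inter_comm]⟩
  loopless := by constructor; rintro v ⟨h, -⟩; exact h rfl

/-- d_K(v): the number of vertices of K adjacent to v. -/
noncomputable def degIn {V : Type*} (G : SimpleGraph V) (K : Set V) (v : V) : ℕ :=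
  {u ∈ K | G.Adj v u}.ncard

/-- If K has γk vertices (γ ≥ 1 real, γk a positive integer) and every vertex of K has at
least (γ+1)k/2 neighbors within K, then K is a clique in the k-intersection polishing P^k(G). -/
theorem stmt2 {V : Type*} [Fintype V] (G : SimpleGraph V) (k : ℕ) (hk : 0 < k)
    (γ : ℝ) (hγ : 1 ≤ γ) (K : Set V)
    (hKcard : (K.ncard : ℝ) = γ * k) (hKpos : 0 < K.ncard)
    (hdeg : ∀ v ∈ K, ((γ + 1) * k / 2 : ℝ) ≤ (degIn G K v : ℝ)) :
    (polish k G).IsClique K := by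
  intro u hu v hv huv
  refine ⟨huv, ?_⟩
  classical
  have hVfin : ∀ (s : Set V), s.Finite := fun s => s.toFinite
  set A : Set V := {x ∈ K | G.Adj u x} with hA
  set B : Set V := {x ∈ K | G.Adj v x} with hB
  have hAB : A ∩ B ⊆ closedNbhd G u ∩ closedNbhd G v := by
    rintro x ⟨⟨-, hxu⟩, ⟨-, hxv⟩⟩
    exact ⟨Set.mem_insert_of_mem _ hxu, Set.mem_insert_of_mem _ hxv⟩
  have hmono : (A ∩ B).ncard ≤ (closedNbhd G u ∩ closedNbhd G v).ncard :=
    Set.ncard_le_ncard hAB (hVfin _)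
  have key : (A ∪ B).ncard + (A ∩ B).ncard = A.ncard + B.ncard :=
    Set.ncard_union_add_ncard_inter A B (hVfin _) (hVfin _)
  have hUnion : (A ∪ B).ncard ≤ K.ncard := by
    apply Set.ncard_le_ncard _ (hVfin _)
    rintro x (⟨hx, -⟩ | ⟨hx, -⟩) <;> exact hx
  have hdu := hdeg u hu
  have hdv := hdeg v hv
  have hdegu : degIn G K u = A.ncard := rfl
  have hdegv : degIn G K v = B.ncard := rfl
  -- show (k : ℝ) ≤ (A ∩ B).ncard
  have hreal : (k : ℝ) ≤ ((A ∩ B).ncard : ℝ) := by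
    have h1 : (A.ncard : ℝ) + B.ncard ≤ (A ∪ B).ncard + (A ∩ B).ncard := by
      exact_mod_cast key.ge
    have h2 : ((A ∪ B).ncard : ℝ) ≤ γ * k := by
      rw [← hKcard]; exact_mod_cast hUnion
    rw [hdegu] at hdu
    rw [hdegv] at hdv
    nlinarith
  have : (k : ℝ) ≤ ((closedNbhd G u ∩ closedNbhd G v).ncard : ℝ) :=
    le_trans hreal (by exact_mod_cast hmono)
  exact_mod_cast this
end

section
/- Let G = (V,E) be a finite simple graph, k a positive integer, and γ > 2 + √2 a real number with γk a positive integer. If K ⊆ V is an (8/9)-pseudo clique of γk vertices (density of K in G equals 8/9) whose minimum degree within K is at least (γ+1)k/3, then the density of K in P^k(G) is strictly greater than the density of K in G. -/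
/-- The density of a vertex set K in G: |E[K]| / (|K|(|K|-1)/2), computed here by
counting ordered adjacent pairs (each edge twice) divided by |K|(|K|-1). -/
noncomputable def density {V : Type*} (G : SimpleGraph V) (K : Set V) : ℝ :=
  ({p : V × V | p.1 ∈ K ∧ p.2 ∈ K ∧ G.Adj p.1 p.2}.ncard : ℝ) /
    ((K.ncard : ℝ) * ((K.ncard : ℝ) - 1))

open scoped Classical

lemma stmt5_sqrt2_lt : Real.sqrt 2 < 1.415 := by
  nlinarith [Real.sq_sqrt (by norm_num : (2:ℝ) ≥ 0), Real.sqrt_nonneg 2]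

lemma stmt5_sqrt2_gt : (1.414 : ℝ) < Real.sqrt 2 := by
  nlinarith [Real.sq_sqrt (by norm_num : (2:ℝ) ≥ 0), Real.sqrt_nonneg 2]

lemma stmt5_core_numeric {n k s : ℝ} (hs : s^2 = 2) (hs1 : 1.414 ≤ s) (hs2 : s ≤ 1.415)
    (hk : 1 ≤ k) (hn : (2+s)*k < n) (h9 : 9 ≤ n + k) :
    0 < 2*n^2 + 7*n - 6*k*n + 24*k - 72 := by
  nlinarith [mul_nonneg (sub_nonneg.2 hn.le) (sub_nonneg.2 h9),
    mul_nonneg (sub_nonneg.2 hn.le) (sub_nonneg.2 hk),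
    mul_nonneg (sub_nonneg.2 h9) (sub_nonneg.2 hk),
    sq_nonneg (n + k - 9), sq_nonneg (n - (2+s)*k), mul_pos (lt_of_lt_of_le (by norm_num) hk : (0:ℝ) < k) (lt_trans (by nlinarith : (0:ℝ) < (2+s)*k) hn)]

set_option maxHeartbeats 1000000 in
lemma stmt5_core_real {γ k n x p T a b E0 : ℝ}
    (hγ : 2 + Real.sqrt 2 < γ) (hk : 1 ≤ k) (hn : n = γ * k) (h9 : 9 ≤ n + k)
    (hT : T = n - k + 1) (ha : a = n - 1 - (γ+1)*k/3) (hb : b = T - a) (hE : E0 = n*(n-1)/9)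
    (hx0 : 0 ≤ x) (hp0 : 0 ≤ p) (hpE : p ≤ E0)
    (hTx : T * x ≤ 2*p) (hpa : p ≤ a*x) :
    x^2 + 2*(E0 - p)*((2*b*x + (2*p - T*x))/(T*b)) < E0 := by
  have hs2 : (Real.sqrt 2)^2 = 2 := Real.sq_sqrt (by norm_num)
  have hsl : Real.sqrt 2 < 1.415 := stmt5_sqrt2_lt
  have hsg : (1.414:ℝ) < Real.sqrt 2 := stmt5_sqrt2_gt
  have hγ3 : (3.414:ℝ) < γ := by linarith only [hγ, hsg]
  have hk0 : (0:ℝ) < k := lt_of_lt_of_le one_pos hk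
  have hγk1 : 0 ≤ γ * (k - 1) :=
    mul_nonneg (by linarith only [hγ3]) (by linarith only [hk])
  have hn3 : (3.414:ℝ) < n := by rw [hn]; linarith only [hγk1, hγ3]
  have hbv : b = (γ-2)*k/3 + 2 := by rw [hb, hT, ha]; ring
  have hγ2k : 0 < (γ-2)*k := mul_pos (by linarith only [hγ3]) hk0
  have hbpos : 0 < b := by rw [hbv]; linarith only [hγ2k]
  have habd : a - b = (n + k - 9)/3 := by rw [hbv, ha, hn]; ring
  have hab : b ≤ a := by rw [← sub_nonneg, habd]; linarith only [h9]
  have hapos : 0 < a := lt_of_lt_of_le hbpos hab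
  have h2ab : 2*a - b = n - 4 := by rw [hbv, ha, hn]; ring
  have h2abpos : 0 < 2*a - b := by linarith only [hab, hbpos]
  have hTab : T = a + b := by rw [hb]; ring
  have hγ3k : 0 < (γ-3)*k := mul_pos (by linarith only [hγ3]) hk0
  have hTpos : 2*n/3 < T := by rw [hT, hn]; linarith only [hγ3k]
  have hT0 : 0 < T := by linarith only [hTpos, hn3]
  have hnn1 : 0 < n*(n-1) := mul_pos (by linarith only [hn3]) (by linarith only [hn3])
  have hE0pos : 0 < E0 := by rw [hE]; linarith only [hnn1]
  have hI : 4*E0 < T^2 := by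
    have h3 : 0 < (T - 2*n/3)*(T + 2*n/3) :=
      mul_pos (by linarith only [hTpos]) (by linarith only [hTpos, hn3])
    rw [hE]; linarith only [h3, hn3]
  have hnum : 0 < 2*n^2 + 7*n - 6*k*n + 24*k - 72 :=
    stmt5_core_numeric hs2 hsg.le hsl.le hk (by
      have h := mul_pos (by linarith only [hγ] : (0:ℝ) < γ - (2+Real.sqrt 2)) hk0
      rw [hn]; linarith only [h]) h9
  have hII : E0 < b*(2*a-b) := by
    have hbv2 : b = (n - 2*k)/3 + 2 := by rw [hbv, hn]; ring
    rw [h2ab, hE, hbv2]; linarith only [hnum]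
  have hEp : 0 ≤ E0 - p := by linarith only [hpE]
  set c1 : ℝ := 2*(E0-p)*(2/T - 1/b) with hc1
  set c0 : ℝ := 4*p*(E0-p)/(T*b) with hc0
  have hform : x^2 + 2*(E0 - p)*((2*b*x + (2*p - T*x))/(T*b)) = x^2 + c1*x + c0 := by
    rw [hc1, hc0]; field_simp; ring
  rw [hform]
  have hx1 : x ≤ 2*p/T := by rw [le_div_iff₀ hT0]; linarith only [hTx]
  have hx2 : p/a ≤ x := by rw [div_le_iff₀ hapos]; linarith only [hpa]
  have hend1 : (p/a)^2 + c1*(p/a) + c0 < E0 := by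
    have hval : (p/a)^2 + c1*(p/a) + c0 = (p^2*b + 2*a*p*(E0-p))/(a^2*b) := by
      rw [hc1, hc0, hTab]; field_simp; ring
    have hid : (2*a-b)*(E0*a^2*b - (p^2*b + 2*a*p*(E0-p)))
        = (p*(2*a-b) - a*E0)^2 + a^2*E0*(b*(2*a-b) - E0) := by ring
    have hrhs : 0 < (p*(2*a-b) - a*E0)^2 + a^2*E0*(b*(2*a-b) - E0) := by
      have h1 : 0 < a^2*E0*(b*(2*a-b) - E0) := by
        apply mul_pos (mul_pos (by positivity) hE0pos); linarith only [hII]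
      have h2 : 0 ≤ (p*(2*a-b) - a*E0)^2 := sq_nonneg _
      linarith only [h1, h2]
    have hX : 0 < E0*a^2*b - (p^2*b + 2*a*p*(E0-p)) := by
      by_contra hcon
      push_neg at hcon
      have hm : (2*a-b)*(E0*a^2*b - (p^2*b + 2*a*p*(E0-p))) ≤ 0 :=
        mul_nonpos_of_nonneg_of_nonpos h2abpos.le hcon
      linarith only [hm, hid, hrhs]
    rw [hval, div_lt_iff₀ (by positivity)]
    linarith only [hX]
  have hend2 : (2*p/T)^2 + c1*(2*p/T) + c0 < E0 := by
    have hval : (2*p/T)^2 + c1*(2*p/T) + c0 = 4*(2*p*E0 - p^2)/T^2 := by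
      rw [hc1, hc0]; field_simp; ring
    have h4 : 4*(2*p*E0 - p^2) ≤ 4*E0^2 := by
      have := sq_nonneg (p - E0); linarith only [this]
    have h5 : 4*E0^2 < E0*T^2 := by
      have := mul_lt_mul_of_pos_left hI hE0pos; linarith only [this]
    rw [hval, div_lt_iff₀ (by positivity)]
    linarith only [h4, h5]
  by_cases hcase : x + p/a + c1 ≤ 0
  · have hprod : (x - p/a)*(x + p/a + c1) ≤ 0 :=
      mul_nonpos_of_nonneg_of_nonpos (by linarith only [hx2]) hcase
    linarith only [hprod, hend1]
  · push_neg at hcase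
    have h2aT : T ≤ 2*a := by rw [hTab]; linarith only [hab]
    have hpa2 : p/a ≤ 2*p/T := by
      rw [div_le_div_iff₀ hapos hT0]
      have := mul_nonneg hp0 (by linarith only [h2aT] : 0 ≤ 2*a - T)
      linarith only [this]
    have hprod : (x - 2*p/T)*(x + 2*p/T + c1) ≤ 0 :=
      mul_nonpos_of_nonpos_of_nonneg (by linarith only [hx1]) (by linarith only [hcase, hpa2])
    linarith only [hprod, hend2]

lemma stmt5_card_filter_product_left {α β : Type*} (s : Finset α) (t : Finset β) (Q : α → β → Prop) :
    ((s ×ˢ t).filter (fun p => Q p.1 p.2)).card = ∑ a ∈ s, (t.filter (fun b => Q a b)).card := by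
  rw [Finset.card_filter, Finset.sum_product]
  refine Finset.sum_congr rfl fun a _ => ?_
  rw [Finset.card_filter]

lemma stmt5_card_filter_product_right {α β : Type*} (s : Finset α) (t : Finset β) (Q : α → β → Prop) :
    ((s ×ˢ t).filter (fun p => Q p.1 p.2)).card = ∑ b ∈ t, (s.filter (fun a => Q a b)).card := by
  rw [Finset.card_filter, Finset.sum_product, Finset.sum_comm]
  refine Finset.sum_congr rfl fun b _ => ?_
  rw [Finset.card_filter]

lemma stmt5_closed_inter_card {V : Type*} [Fintype V] (G : SimpleGraph V) (K : Set V)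
    {u v : V} (hu : u ∈ K) (hv : v ∈ K) :
    degIn G K u + degIn G K v + 2 ≤ (closedNbhd G u ∩ closedNbhd G v).ncard + K.ncard := by
  classical
  have hKfin : K.Finite := Set.toFinite K
  set A : Set V := closedNbhd G u ∩ K with hA
  set B : Set V := closedNbhd G v ∩ K with hB
  have hAeq : A = insert u {w ∈ K | G.Adj u w} := by
    ext w
    simp only [hA, closedNbhd, Set.mem_inter_iff, Set.mem_insert_iff,
      SimpleGraph.mem_neighborSet, Set.mem_setOf_eq]
    constructor
    · rintro ⟨h1 | h2, hw⟩
      · exact Or.inl h1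
      · exact Or.inr ⟨hw, h2⟩
    · rintro (rfl | ⟨hw, h2⟩)
      · exact ⟨Or.inl rfl, hu⟩
      · exact ⟨Or.inr h2, hw⟩
  have hBeq : B = insert v {w ∈ K | G.Adj v w} := by
    ext w
    simp only [hB, closedNbhd, Set.mem_inter_iff, Set.mem_insert_iff,
      SimpleGraph.mem_neighborSet, Set.mem_setOf_eq]
    constructor
    · rintro ⟨h1 | h2, hw⟩
      · exact Or.inl h1
      · exact Or.inr ⟨hw, h2⟩
    · rintro (rfl | ⟨hw, h2⟩)
      · exact ⟨Or.inl rfl, hv⟩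
      · exact ⟨Or.inr h2, hw⟩
  have hAcard : A.ncard = degIn G K u + 1 := by
    rw [hAeq, Set.ncard_insert_of_notMem (by simp) (Set.toFinite _)]
    simp [degIn]
  have hBcard : B.ncard = degIn G K v + 1 := by
    rw [hBeq, Set.ncard_insert_of_notMem (by simp) (Set.toFinite _)]
    simp [degIn]
  have h1 : (A ∩ B).ncard ≤ (closedNbhd G u ∩ closedNbhd G v).ncard :=
    Set.ncard_le_ncard (fun w hw => ⟨hw.1.1, hw.2.1⟩) (Set.toFinite _)
  have h2 : (A ∪ B).ncard ≤ K.ncard :=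
    Set.ncard_le_ncard (Set.union_subset Set.inter_subset_right Set.inter_subset_right) hKfin
  have h3 := Set.ncard_union_add_ncard_inter A B (Set.toFinite _) (Set.toFinite _)
  omega


set_option maxHeartbeats 4000000 in
/-- Let K be an (8/9)-pseudo clique of γk vertices (γ > 2 + √2, γk a positive integer)
whose minimum degree within K is at least (γ+1)k/3. Then the density of K strictly
increases under k-intersection polishing. -/
theorem stmt5 {V : Type*} [Fintype V] (G : SimpleGraph V) (k : ℕ) (hk : 0 < k)
    (γ : ℝ) (hγ : 2 + Real.sqrt 2 < γ) (K : Set V)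
    (hKcard : (K.ncard : ℝ) = γ * k) (hKpos : 0 < K.ncard)
    (hdens : density G K = 8 / 9)
    (hdeg : ∀ v ∈ K, ((γ + 1) * k / 3 : ℝ) ≤ (degIn G K v : ℝ)) :
    density G K < density (polish k G) K := by
  classical
  have hKfin : K.Finite := Set.toFinite K
  set n : ℕ := K.ncard with hndef
  set Kf : Finset V := hKfin.toFinset with hKfdef
  have hKmem : ∀ {w : V}, w ∈ Kf ↔ w ∈ K := fun {w} => hKfin.mem_toFinset
  have hKfcard : Kf.card = n := by
    rw [hKfdef, hndef]; exact (Set.ncard_eq_toFinset_card _ hKfin).symm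
  clear_value n Kf
  -- real basics
  have hk1 : (1:ℝ) ≤ (k:ℝ) := by exact_mod_cast hk
  have hsg : (1.414:ℝ) < Real.sqrt 2 := stmt5_sqrt2_gt
  have hγ3 : (3.414:ℝ) < γ := by linarith only [hγ, hsg]
  have hk0R : (0:ℝ) < k := by linarith only [hk1]
  have hγk1 : 0 ≤ γ*((k:ℝ)-1) := mul_nonneg (by linarith only [hγ3]) (by linarith only [hk1])
  have hnR3 : (3.414:ℝ) < (n:ℝ) := by rw [hKcard]; linarith only [hγk1, hγ3]
  have hnn : (0:ℝ) < (n:ℝ)*((n:ℝ)-1) := mul_pos (by linarith only [hnR3]) (by linarith only [hnR3])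
  have hn1 : 1 ≤ n := hKpos
  -- e function
  set e : V → ℝ := fun v => (n:ℝ) - 1 - (degIn G K v : ℝ) with hedef
  clear_value e
  -- degIn as a filter card
  have hdeq : ∀ w : V, degIn G K w = (Kf.filter (fun u => G.Adj w u)).card := by
    intro w
    have hfin : ({u ∈ K | G.Adj w u}).Finite := Set.toFinite _
    have hset : hfin.toFinset = Kf.filter (fun u => G.Adj w u) := by
      ext z
      simp [Set.Finite.mem_toFinset, hKfdef, Set.mem_setOf_eq]
    rw [degIn, Set.ncard_eq_toFinset_card _ hfin, hset]
  -- numerator of density G K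
  have hnumG : ({p : V × V | p.1 ∈ K ∧ p.2 ∈ K ∧ G.Adj p.1 p.2}.ncard : ℝ)
      = ∑ v ∈ Kf, (degIn G K v : ℝ) := by
    have hfin : ({p : V × V | p.1 ∈ K ∧ p.2 ∈ K ∧ G.Adj p.1 p.2}).Finite := Set.toFinite _
    have hset : hfin.toFinset = (Kf ×ˢ Kf).filter (fun p => G.Adj p.1 p.2) := by
      ext ⟨u2, v2⟩
      simp [Set.Finite.mem_toFinset, hKfdef, Finset.mem_filter, Finset.mem_product, and_assoc, Set.mem_setOf_eq]
    rw [Set.ncard_eq_toFinset_card _ hfin, hset, stmt5_card_filter_product_left]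
    push_cast
    exact Finset.sum_congr rfl fun v _ => by rw [hdeq v]
  have hdsum : ∑ v ∈ Kf, (degIn G K v:ℝ) = 8/9*((n:ℝ)*((n:ℝ)-1)) := by
    have h := hdens
    simp only [density] at h
    rw [← hndef, div_eq_iff (ne_of_gt hnn)] at h
    rw [← hnumG]
    linarith only [h]
  set E0 : ℝ := (n:ℝ)*((n:ℝ)-1)/9 with hE0def
  clear_value E0
  have hE0pos : 0 < E0 := by rw [hE0def]; linarith only [hnn]
  have hesum : ∑ v ∈ Kf, e v = E0 := by
    simp only [hedef]
    rw [Finset.sum_sub_distrib, Finset.sum_sub_distrib, Finset.sum_const, Finset.sum_const,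
      hKfcard, nsmul_eq_mul, nsmul_eq_mul, hdsum, hE0def]
    ring
  -- bounds on e
  have hd_le : ∀ v ∈ Kf, degIn G K v + 1 ≤ n := by
    intro v hv
    have hvK : v ∈ K := hKmem.1 hv
    have hsub : {u ∈ K | G.Adj v u} ⊆ K \ {v} := by
      intro w hw
      exact ⟨hw.1, by simp only [Set.mem_singleton_iff]; rintro rfl; exact G.irrefl hw.2⟩
    have h1 : degIn G K v ≤ (K \ {v}).ncard := Set.ncard_le_ncard hsub hKfin.sdiff
    have h2 : (K \ {v}).ncard = n - 1 := by
      rw [Set.ncard_diff_singleton_of_mem hvK, hndef]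
    omega
  have he0 : ∀ v ∈ Kf, 0 ≤ e v := by
    intro v hv
    have h := hd_le v hv
    have hR : (degIn G K v:ℝ) + 1 ≤ (n:ℝ) := by exact_mod_cast h
    simp only [hedef]
    linarith only [hR]
  set aR : ℝ := (n:ℝ) - 1 - (γ+1)*k/3 with haRdef
  clear_value aR
  have hea : ∀ v ∈ Kf, e v ≤ aR := by
    intro v hv
    have h := hdeg v (hKmem.1 hv)
    simp only [hedef, haRdef]
    linarith only [h]
  set TR : ℝ := (n:ℝ) - (k:ℝ) + 1 with hTRdef
  clear_value TR
  set bR : ℝ := TR - aR with hbRdef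
  clear_value bR
  have hbval : bR = (γ-2)*(k:ℝ)/3 + 2 := by rw [hbRdef, hTRdef, haRdef]; ring
  have hb0 : 0 < bR := by
    rw [hbval]
    have h := mul_pos (by linarith only [hγ3] : (0:ℝ) < γ - 2) hk0R
    linarith only [h]
  have hTR0 : 0 < TR := by
    rw [hTRdef]
    have h := mul_pos (by linarith only [hγ3] : (0:ℝ) < γ - 1) hk0R
    rw [hKcard]
    linarith only [h, hk1]
  -- offDiag and bad set
  set Od : Finset (V × V) := Kf.offDiag with hOddef
  clear_value Od
  set S : Finset (V × V) := Od.filter (fun pr => TR ≤ e pr.1 + e pr.2) with hSdef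
  clear_value S
  have hBadS : Od.filter (fun pr => ¬ (polish k G).Adj pr.1 pr.2) ⊆ S := by
    intro pr hpr
    rw [Finset.mem_filter] at hpr
    obtain ⟨hOd, hnadj⟩ := hpr
    have hOd' := hOd
    rw [hOddef, Finset.mem_offDiag] at hOd'
    obtain ⟨h1, h2, hne⟩ := hOd'
    rw [hSdef, Finset.mem_filter]
    refine ⟨hOd, ?_⟩
    have hcard : (closedNbhd G pr.1 ∩ closedNbhd G pr.2).ncard + 1 ≤ k := by
      by_contra hge
      push_neg at hge
      exact hnadj ⟨hne, by omega⟩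
    have hkey := stmt5_closed_inter_card G K (hKmem.1 h1) (hKmem.1 h2)
    rw [← hndef] at hkey
    have hNat : degIn G K pr.1 + degIn G K pr.2 + 3 ≤ k + n := by omega
    have hRe : (degIn G K pr.1 : ℝ) + (degIn G K pr.2:ℝ) + 3 ≤ (k:ℝ) + (n:ℝ) := by
      exact_mod_cast hNat
    simp only [hedef, hTRdef]
    linarith only [hRe]
  -- main inequality on S.card
  have hScard : ((S.card : ℕ):ℝ) < E0 := by
    by_cases h9 : 9 ≤ (n:ℝ) + (k:ℝ)
    · -- main case
      set L : Finset V := Kf.filter (fun v => TR ≤ 2 * e v) with hLdef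
      set M : Finset V := Kf \ L with hMdef
      clear_value L M
      have hLsub : L ⊆ Kf := by rw [hLdef]; exact Finset.filter_subset _ _
      have hMsub : M ⊆ Kf := by rw [hMdef]; exact Finset.sdiff_subset
      have hLmem : ∀ {v : V}, v ∈ L ↔ v ∈ Kf ∧ TR ≤ 2 * e v := fun {v} => by
        rw [hLdef, Finset.mem_filter]
      have hMmem : ∀ {v : V}, v ∈ M ↔ v ∈ Kf ∧ v ∉ L := fun {v} => by
        rw [hMdef, Finset.mem_sdiff]
      set x : ℝ := (L.card : ℝ) with hxdef
      set pL : ℝ := ∑ v ∈ L, e v with hpLdef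
      clear_value x pL
      have hx0 : (0:ℝ) ≤ x := by rw [hxdef]; exact Nat.cast_nonneg _
      have hp0 : 0 ≤ pL := by
        rw [hpLdef]; exact Finset.sum_nonneg (fun v hv => he0 v (hLsub hv))
      have hpE : pL ≤ E0 := by
        rw [hpLdef, ← hesum]
        exact Finset.sum_le_sum_of_subset_of_nonneg hLsub (fun v hv _ => he0 v hv)
      have hMsum : ∑ v ∈ M, e v = E0 - pL := by
        rw [hMdef, Finset.sum_sdiff_eq_sub hLsub, hesum, hpLdef]
      have hTx : TR * x ≤ 2 * pL := by
        have h : ∑ _v ∈ L, TR ≤ ∑ v ∈ L, 2 * e v :=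
          Finset.sum_le_sum (fun v hv => (hLmem.1 hv).2)
        rw [Finset.sum_const, nsmul_eq_mul, ← Finset.mul_sum] at h
        rw [hxdef, hpLdef]
        linarith only [h]
      have hpa : pL ≤ aR * x := by
        have h : ∑ v ∈ L, e v ≤ ∑ _v ∈ L, aR :=
          Finset.sum_le_sum (fun v hv => hea v (hLsub hv))
        rw [Finset.sum_const, nsmul_eq_mul] at h
        rw [hpLdef, hxdef]
        linarith only [h]
      set m : V → ℕ := fun v => (M.filter (fun u => TR ≤ e u + e v)).card with hmdef
      clear_value m
      have hmB : ∀ v ∈ L, (m v:ℝ) * (TR * bR) ≤ (E0 - pL) * (2*bR + (2*e v - TR)) := by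
        intro v hv
        have hvK : v ∈ Kf := hLsub hv
        have hev2 : TR ≤ 2 * e v := (hLmem.1 hv).2
        have heva : e v ≤ aR := hea v hvK
        have hTev : bR ≤ TR - e v := by rw [hbRdef]; linarith only [heva]
        have hTevpos : 0 < TR - e v := lt_of_lt_of_le hb0 hTev
        have hstep1 : (m v:ℝ) * (TR - e v) ≤ E0 - pL := by
          have h0 := Finset.card_nsmul_le_sum (M.filter (fun u => TR ≤ e u + e v)) e (TR - e v)
            (fun u hu => by
              have h := (Finset.mem_filter.1 hu).2
              linarith only [h])
          rw [nsmul_eq_mul] at h0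
          have h1 : (m v:ℝ) * (TR - e v) ≤ ∑ u ∈ M.filter (fun u => TR ≤ e u + e v), e u := by
            simp only [hmdef]
            exact h0
          have h2 : ∑ u ∈ M.filter (fun u => TR ≤ e u + e v), e u ≤ ∑ u ∈ M, e u :=
            Finset.sum_le_sum_of_subset_of_nonneg (Finset.filter_subset _ _)
              (fun u hu _ => he0 u (hMsub hu))
          rw [hMsum] at h2
          linarith only [h1, h2]
        have hfac : 0 ≤ 2*bR + (2*e v - TR) := by linarith only [hb0, hev2]
        have hkey2 : TR * bR ≤ (TR - e v) * (2*bR + (2*e v - TR)) := by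
          have haRv : aR = TR - bR := by rw [hbRdef]; ring
          have hprod := mul_nonneg (by linarith only [hev2] : (0:ℝ) ≤ 2*e v - TR)
            (by linarith only [heva] : (0:ℝ) ≤ aR - e v)
          rw [haRv] at hprod
          linarith only [hprod]
        calc (m v:ℝ) * (TR*bR) ≤ (m v:ℝ) * ((TR - e v)*(2*bR + (2*e v - TR))) :=
              mul_le_mul_of_nonneg_left hkey2 (Nat.cast_nonneg _)
          _ = ((m v:ℝ) * (TR - e v)) * (2*bR + (2*e v - TR)) := by ring
          _ ≤ (E0 - pL) * (2*bR + (2*e v - TR)) := mul_le_mul_of_nonneg_right hstep1 hfac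
      have hSm : (∑ v ∈ L, (m v:ℝ)) * (TR * bR) ≤ (E0 - pL) * (2*bR*x + (2*pL - TR*x)) := by
        have h := Finset.sum_le_sum hmB
        rw [← Finset.sum_mul] at h
        have hrhs : ∑ v ∈ L, (E0 - pL) * (2*bR + (2*e v - TR))
            = (E0 - pL) * (2*bR*x + (2*pL - TR*x)) := by
          rw [← Finset.mul_sum]
          congr 1
          rw [Finset.sum_add_distrib, Finset.sum_sub_distrib, Finset.sum_const, Finset.sum_const,
            ← Finset.mul_sum, nsmul_eq_mul, nsmul_eq_mul]
          rw [hxdef, hpLdef]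
          ring
        rw [hrhs] at h
        exact h
      have hc11sub : (S.filter (fun pr => pr.1 ∈ L)).filter (fun pr => pr.2 ∈ L) ⊆ L ×ˢ L := by
        intro pr hpr
        simp only [Finset.mem_filter] at hpr
        exact Finset.mem_product.2 ⟨hpr.1.2, hpr.2⟩
      have hc11 : ((S.filter (fun pr => pr.1 ∈ L)).filter (fun pr => pr.2 ∈ L)).card
          ≤ L.card * L.card := by
        refine le_trans (Finset.card_le_card hc11sub) ?_
        rw [Finset.card_product]
      have hc12 : ((S.filter (fun pr => pr.1 ∈ L)).filter (fun pr => ¬ pr.2 ∈ L)).card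
          ≤ ∑ v ∈ L, m v := by
        have hsub2 : (S.filter (fun pr => pr.1 ∈ L)).filter (fun pr => ¬ pr.2 ∈ L)
            ⊆ (L ×ˢ M).filter (fun pr => TR ≤ e pr.1 + e pr.2) := by
          intro pr hpr
          simp only [Finset.mem_filter] at hpr
          obtain ⟨⟨hprS, h1L⟩, h2L⟩ := hpr
          rw [hSdef, Finset.mem_filter] at hprS
          obtain ⟨hOd', hTle⟩ := hprS
          rw [hOddef, Finset.mem_offDiag] at hOd'
          exact Finset.mem_filter.2 ⟨Finset.mem_product.2 ⟨h1L, hMmem.2 ⟨hOd'.2.1, h2L⟩⟩, hTle⟩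
        refine le_trans (Finset.card_le_card hsub2) ?_
        refine le_trans (le_of_eq (stmt5_card_filter_product_left L M (fun a b => TR ≤ e a + e b))) ?_
        refine le_of_eq (Finset.sum_congr rfl fun v hv => ?_)
        simp only [hmdef]
        congr 1
        apply Finset.filter_congr
        intro u hu
        constructor <;> intro h <;> linarith only [h]
      have hc2 : (S.filter (fun pr => ¬ pr.1 ∈ L)).card ≤ ∑ v ∈ L, m v := by
        have hsub2 : S.filter (fun pr => ¬ pr.1 ∈ L)
            ⊆ (M ×ˢ L).filter (fun pr => TR ≤ e pr.1 + e pr.2) := by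
          intro pr hpr
          simp only [Finset.mem_filter] at hpr
          obtain ⟨hprS, h1L⟩ := hpr
          rw [hSdef, Finset.mem_filter] at hprS
          obtain ⟨hOd', hTle⟩ := hprS
          rw [hOddef, Finset.mem_offDiag] at hOd'
          obtain ⟨h1K, h2K, hne⟩ := hOd'
          have h1e : ¬ TR ≤ 2 * e pr.1 := fun hcon => h1L (hLmem.2 ⟨h1K, hcon⟩)
          push_neg at h1e
          have h2e : TR ≤ 2 * e pr.2 := by linarith only [h1e, hTle]
          exact Finset.mem_filter.2
            ⟨Finset.mem_product.2 ⟨hMmem.2 ⟨h1K, h1L⟩, hLmem.2 ⟨h2K, h2e⟩⟩, hTle⟩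
        refine le_trans (Finset.card_le_card hsub2) ?_
        refine le_trans (le_of_eq (stmt5_card_filter_product_right M L (fun a b => TR ≤ e a + e b))) ?_
        refine le_of_eq (Finset.sum_congr rfl fun v hv => ?_)
        simp only [hmdef]
      have hsplit1 : (S.filter (fun pr => pr.1 ∈ L)).card
          + (S.filter (fun pr => ¬ pr.1 ∈ L)).card = S.card :=
        Finset.card_filter_add_card_filter_not (s := S) (p := fun pr => pr.1 ∈ L)
      have hsplit2 : ((S.filter (fun pr => pr.1 ∈ L)).filter (fun pr => pr.2 ∈ L)).card
          + ((S.filter (fun pr => pr.1 ∈ L)).filter (fun pr => ¬ pr.2 ∈ L)).card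
          = (S.filter (fun pr => pr.1 ∈ L)).card :=
        Finset.card_filter_add_card_filter_not
          (s := S.filter (fun pr => pr.1 ∈ L)) (p := fun pr => pr.2 ∈ L)
      have hSnat : S.card ≤ L.card * L.card + ((∑ v ∈ L, m v) + (∑ v ∈ L, m v)) := by
        calc S.card = (S.filter (fun pr => pr.1 ∈ L)).card
              + (S.filter (fun pr => ¬ pr.1 ∈ L)).card := hsplit1.symm
          _ = (((S.filter (fun pr => pr.1 ∈ L)).filter (fun pr => pr.2 ∈ L)).card
              + ((S.filter (fun pr => pr.1 ∈ L)).filter (fun pr => ¬ pr.2 ∈ L)).card)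
              + (S.filter (fun pr => ¬ pr.1 ∈ L)).card := by rw [hsplit2]
          _ ≤ (L.card * L.card + (∑ v ∈ L, m v)) + (∑ v ∈ L, m v) :=
              Nat.add_le_add (Nat.add_le_add hc11 hc12) hc2
          _ = L.card * L.card + ((∑ v ∈ L, m v) + (∑ v ∈ L, m v)) := Nat.add_assoc _ _ _
      have hSR : ((S.card:ℕ):ℝ) ≤ x^2 + 2 * ∑ v ∈ L, (m v:ℝ) := by
        have hcast : ((S.card:ℕ):ℝ) ≤ (L.card:ℝ) * (L.card:ℝ)
            + (((∑ v ∈ L, m v : ℕ):ℝ) + ((∑ v ∈ L, m v : ℕ):ℝ)) := by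
          exact_mod_cast hSnat
        rw [hxdef, pow_two]
        push_cast at hcast ⊢
        linarith only [hcast]
      have hTb0 : 0 < TR * bR := mul_pos hTR0 hb0
      have hSmle : ∑ v ∈ L, (m v:ℝ) ≤ (E0 - pL) * ((2*bR*x + (2*pL - TR*x))/(TR*bR)) := by
        rw [← mul_div_assoc, le_div_iff₀ hTb0]
        exact hSm
      have hcore := stmt5_core_real hγ hk1 hKcard h9 hTRdef haRdef hbRdef hE0def hx0 hp0 hpE hTx hpa
      linarith only [hSR, hSmle, hcore]
    · -- degenerate case : S is empty
      push_neg at h9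
      have hSempty : S = ∅ := by
        rw [Finset.eq_empty_iff_forall_notMem]
        intro pr hpr
        rw [hSdef, Finset.mem_filter] at hpr
        obtain ⟨hOd', hTle⟩ := hpr
        rw [hOddef, Finset.mem_offDiag] at hOd'
        have e1 := hea pr.1 hOd'.1
        have e2 := hea pr.2 hOd'.2.1
        have hnk : (n:ℝ) + (k:ℝ) = (γ+1)*k := by rw [hKcard]; ring
        have h2a : 2*aR < TR := by
          have h1 : aR = (n:ℝ)-1-(γ+1)*k/3 := haRdef
          have h2 : TR = (n:ℝ)-(k:ℝ)+1 := hTRdef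
          linarith only [h1, h2, hnk, h9]
        linarith only [e1, e2, h2a, hTle]
      rw [hSempty]
      simpa using hE0pos
  -- final assembly
  have hfinP : ({p : V×V | p.1 ∈ K ∧ p.2 ∈ K ∧ (polish k G).Adj p.1 p.2}).Finite := Set.toFinite _
  have hsubP : Od.filter (fun pr => (polish k G).Adj pr.1 pr.2) ⊆ hfinP.toFinset := by
    intro pr hpr
    rw [Finset.mem_filter] at hpr
    obtain ⟨hOd', hadj⟩ := hpr
    rw [hOddef, Finset.mem_offDiag] at hOd'
    rw [Set.Finite.mem_toFinset]
    exact ⟨hKmem.1 hOd'.1, hKmem.1 hOd'.2.1, hadj⟩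
  have hleP : (Od.filter (fun pr => (polish k G).Adj pr.1 pr.2)).card
      ≤ ({p : V×V | p.1 ∈ K ∧ p.2 ∈ K ∧ (polish k G).Adj p.1 p.2}).ncard := by
    rw [Set.ncard_eq_toFinset_card _ hfinP]
    exact Finset.card_le_card hsubP
  have hFsplit := Finset.card_filter_add_card_filter_not
    (s := Od) (p := fun pr => (polish k G).Adj pr.1 pr.2)
  have hBadle : (Od.filter (fun pr => ¬ (polish k G).Adj pr.1 pr.2)).card ≤ S.card :=
    Finset.card_le_card hBadS
  have hOdc : Od.card = n*n - n := by rw [hOddef, Finset.offDiag_card, hKfcard]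
  have hnlemul : n ≤ n*n := Nat.le_mul_of_pos_left n hKpos
  have hOdcR : ((Od.card:ℕ):ℝ) = (n:ℝ)*(n:ℝ) - (n:ℝ) := by
    rw [hOdc, Nat.cast_sub hnlemul]
    push_cast
    ring
  have hnumP : ((8:ℝ)/9)*((n:ℝ)*((n:ℝ)-1))
      < (({p : V×V | p.1 ∈ K ∧ p.2 ∈ K ∧ (polish k G).Adj p.1 p.2}).ncard : ℝ) := by
    have hc1 : ((Od.filter (fun pr => (polish k G).Adj pr.1 pr.2)).card : ℝ)
        + ((Od.filter (fun pr => ¬ (polish k G).Adj pr.1 pr.2)).card : ℝ) = (Od.card : ℝ) := by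
      exact_mod_cast hFsplit
    have hc2 : ((Od.filter (fun pr => ¬ (polish k G).Adj pr.1 pr.2)).card : ℝ) ≤ (S.card:ℝ) := by
      exact_mod_cast hBadle
    have hc3 : ((Od.filter (fun pr => (polish k G).Adj pr.1 pr.2)).card : ℝ)
        ≤ (({p : V×V | p.1 ∈ K ∧ p.2 ∈ K ∧ (polish k G).Adj p.1 p.2}).ncard : ℝ) := by
      exact_mod_cast hleP
    rw [hE0def] at hScard
    linarith only [hc1, hc2, hc3, hOdcR, hScard]
  rw [hdens]
  have hdpol : density (polish k G) K
      = (({p : V×V | p.1 ∈ K ∧ p.2 ∈ K ∧ (polish k G).Adj p.1 p.2}).ncard : ℝ)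
        / ((n:ℝ)*((n:ℝ)-1)) := by
    simp only [density]
    rw [← hndef]
  rw [hdpol, lt_div_iff₀ hnn]
  linarith only [hnumP]
end

section
/- For every integer k > 4, there exists a finite simple graph G such that no iterate of the k-intersection polishing applied to G is ever a fixed point: for every n ≥ 0, writing G_n for the n-fold application of P^k to G, one has P^k(G_n) ≠ G_n. -/
/-! ### Auxiliary construction

For `k = 5` there is a 3-cycle of circulant graphs on `ZMod 18` under polishing.
For general `k ≥ 5` we join such a graph with a clique on `k - 5` extra "apex"
vertices; polishing then reduces to 5-polishing on the circulant part. -/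

def S0 : Finset (ZMod 18) := {1,2,5,6,12,13,16,17}
def S1 : Finset (ZMod 18) := {1,4,6,7,11,12,14,17}
def S2 : Finset (ZMod 18) := {5,6,7,8,10,11,12,13}

def circ (S : Finset (ZMod 18)) : SimpleGraph (ZMod 18) where
  Adj u v := u ≠ v ∧ v - u ∈ S ∧ u - v ∈ S
  symm := by constructor; rintro u v ⟨h1, h2, h3⟩; exact ⟨h1.symm, h3, h2⟩
  loopless := by constructor; rintro v ⟨h, -⟩; exact h rfl

instance circDec (S : Finset (ZMod 18)) : DecidableRel (circ S).Adj :=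
  fun u v => inferInstanceAs (Decidable (u ≠ v ∧ v - u ∈ S ∧ u - v ∈ S))

lemma closedNbhd_eq_coe (G : SimpleGraph (ZMod 18)) [DecidableRel G.Adj] (u : ZMod 18) :
    closedNbhd G u = ↑(Finset.univ.filter (fun x => x = u ∨ G.Adj u x)) := by
  ext x
  simp [closedNbhd, SimpleGraph.mem_neighborSet]

lemma inter_ncard_eq (G : SimpleGraph (ZMod 18)) [DecidableRel G.Adj] (u v : ZMod 18) :
    (closedNbhd G u ∩ closedNbhd G v).ncard
      = (Finset.univ.filter (fun x => (x = u ∨ G.Adj u x) ∧ (x = v ∨ G.Adj v x))).card := by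
  rw [← Set.ncard_coe_finset]
  congr 1
  ext x
  simp [closedNbhd, SimpleGraph.mem_neighborSet]

lemma polish5_eq (G G' : SimpleGraph (ZMod 18)) [DecidableRel G.Adj]
    (h : ∀ u v : ZMod 18,
      (u ≠ v ∧ 5 ≤ (Finset.univ.filter
        (fun x => (x = u ∨ G.Adj u x) ∧ (x = v ∨ G.Adj v x))).card) ↔ G'.Adj u v) :
    polish 5 G = G' := by
  ext u v
  rw [show (polish 5 G).Adj u v ↔ (u ≠ v ∧ 5 ≤ (closedNbhd G u ∩ closedNbhd G v).ncard)
    from Iff.rfl, inter_ncard_eq]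
  exact h u v

lemma step01 : polish 5 (circ S0) = circ S1 := polish5_eq _ _ (by decide)
lemma step12 : polish 5 (circ S1) = circ S2 := polish5_eq _ _ (by decide)
lemma step20 : polish 5 (circ S2) = circ S0 := polish5_eq _ _ (by decide)

lemma circ_ncard (S : Finset (ZMod 18)) (u : ZMod 18) :
    (closedNbhd (circ S) u).ncard
      = (Finset.univ.filter (fun x => x = u ∨ (circ S).Adj u x)).card := by
  rw [closedNbhd_eq_coe, Set.ncard_coe_finset]

lemma hdeg0 : ∀ u, 5 ≤ (closedNbhd (circ S0) u).ncard := by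
  intro u; rw [circ_ncard]; revert u; decide
lemma hdeg1 : ∀ u, 5 ≤ (closedNbhd (circ S1) u).ncard := by
  intro u; rw [circ_ncard]; revert u; decide
lemma hdeg2 : ∀ u, 5 ≤ (closedNbhd (circ S2) u).ncard := by
  intro u; rw [circ_ncard]; revert u; decide

lemma ne01 : circ S0 ≠ circ S1 := by
  intro h
  exact absurd (h ▸ (show (circ S0).Adj 0 2 by decide)) (by decide)
lemma ne12 : circ S1 ≠ circ S2 := by
  intro h
  exact absurd (h ▸ (show (circ S1).Adj 0 1 by decide)) (by decide)
lemma ne20 : circ S2 ≠ circ S0 := by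
  intro h
  exact absurd (h ▸ (show (circ S2).Adj 0 7 by decide)) (by decide)

/-- The join of `H` with a clique on `Fin d`, every apex adjacent to everything. -/
def joinG (d : ℕ) (H : SimpleGraph (ZMod 18)) : SimpleGraph (ZMod 18 ⊕ Fin d) where
  Adj x y := match x, y with
    | .inl u, .inl v => H.Adj u v
    | .inl _, .inr _ => True
    | .inr _, .inl _ => True
    | .inr i, .inr j => i ≠ j
  symm := by
    constructor
    rintro (u|i) (v|j) h
    · exact H.adj_symm h
    · trivial
    · trivial
    · exact Ne.symm h
  loopless := by
    constructor
    rintro (u|i) h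
    · exact H.irrefl h
    · exact h rfl

lemma joinG_inj (d : ℕ) (H1 H2 : SimpleGraph (ZMod 18)) (h : joinG d H1 = joinG d H2) :
    H1 = H2 := by
  ext u v
  have h' := congrArg SimpleGraph.Adj h
  exact iff_of_eq (congrFun (congrFun h' (Sum.inl u)) (Sum.inl v))

lemma closed_inl (d : ℕ) (H : SimpleGraph (ZMod 18)) (u : ZMod 18) :
    closedNbhd (joinG d H) (Sum.inl u)
      = Sum.inl '' closedNbhd H u ∪ Set.range Sum.inr := by
  ext (x|j)
  · simp [closedNbhd, joinG, SimpleGraph.mem_neighborSet, Sum.inl.injEq]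
  · simp [closedNbhd, joinG, SimpleGraph.mem_neighborSet]

lemma closed_inr (d : ℕ) (H : SimpleGraph (ZMod 18)) (i : Fin d) :
    closedNbhd (joinG d H) (Sum.inr i) = Set.univ := by
  ext (x|j)
  · simp [closedNbhd, joinG, SimpleGraph.mem_neighborSet]
  · simp only [closedNbhd, joinG, SimpleGraph.mem_neighborSet, Set.mem_insert_iff,
      Set.mem_setOf_eq, Set.mem_univ, iff_true, Sum.inr.injEq]
    exact (eq_or_ne j i).imp id Ne.symm

lemma ncard_aux (A : Set (ZMod 18)) (d : ℕ) :
    ((Sum.inl '' A ∪ Set.range Sum.inr : Set (ZMod 18 ⊕ Fin d))).ncard = A.ncard + d := by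
  rw [Set.ncard_union_eq ?disj (Set.toFinite _) (Set.toFinite _)]
  · rw [Set.ncard_image_of_injective _ Sum.inl_injective]
    congr 1
    rw [show (Set.range (Sum.inr : Fin d → ZMod 18 ⊕ Fin d)) = Sum.inr '' Set.univ by simp,
      Set.ncard_image_of_injective _ Sum.inr_injective, Set.ncard_univ, Nat.card_eq_fintype_card,
      Fintype.card_fin]
  case disj =>
    rw [Set.disjoint_iff_forall_ne]
    rintro a ⟨x, -, rfl⟩ b ⟨y, rfl⟩
    exact Sum.inl_ne_inr

lemma inter_inl (d : ℕ) (H : SimpleGraph (ZMod 18)) (u v : ZMod 18) :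
    closedNbhd (joinG d H) (Sum.inl u) ∩ closedNbhd (joinG d H) (Sum.inl v)
      = Sum.inl '' (closedNbhd H u ∩ closedNbhd H v) ∪ Set.range Sum.inr := by
  rw [closed_inl, closed_inl]
  ext (x|j) <;> simp

lemma polish_join (k : ℕ) (hk : 5 ≤ k) (H : SimpleGraph (ZMod 18))
    (hdeg : ∀ u, 5 ≤ (closedNbhd H u).ncard) :
    polish k (joinG (k - 5) H) = joinG (k - 5) (polish 5 H) := by
  have hcard : (Set.univ : Set (ZMod 18 ⊕ Fin (k - 5))).ncard = 18 + (k - 5) := by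
    rw [Set.ncard_univ, Nat.card_eq_fintype_card, Fintype.card_sum]
    simp
  ext x y
  show (x ≠ y ∧ k ≤ (closedNbhd _ x ∩ closedNbhd _ y).ncard) ↔ _
  rcases x with u | i <;> rcases y with v | j
  · rw [inter_inl, ncard_aux]
    show _ ↔ (polish 5 H).Adj u v
    show _ ↔ (u ≠ v ∧ 5 ≤ (closedNbhd H u ∩ closedNbhd H v).ncard)
    constructor
    · rintro ⟨hne, hc⟩
      exact ⟨fun h => hne (by rw [h]), by omega⟩
    · rintro ⟨hne, hc⟩
      exact ⟨by simp [hne], by omega⟩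
  · rw [closed_inr, Set.inter_univ, closed_inl, ncard_aux]
    have := hdeg u
    show _ ↔ True
    simp only [iff_true]
    exact ⟨Sum.inl_ne_inr, by omega⟩
  · rw [closed_inr, Set.univ_inter, closed_inl, ncard_aux]
    have := hdeg v
    show _ ↔ True
    simp only [iff_true]
    exact ⟨Sum.inr_ne_inl, by omega⟩
  · rw [closed_inr, closed_inr, Set.inter_univ, hcard]
    show _ ↔ (i ≠ j)
    constructor
    · rintro ⟨hne, -⟩ rfl; exact hne rfl
    · intro hne
      exact ⟨by simp [hne], by omega⟩

/-- The sequence of circulant graphs in the 3-cycle. -/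
def Hs (n : ℕ) : SimpleGraph (ZMod 18) :=
  if n % 3 = 0 then circ S0 else if n % 3 = 1 then circ S1 else circ S2

lemma Hs_hdeg (n : ℕ) : ∀ u, 5 ≤ (closedNbhd (Hs n) u).ncard := by
  unfold Hs
  split
  · exact hdeg0
  split
  · exact hdeg1
  · exact hdeg2

lemma Hs_step (n : ℕ) : polish 5 (Hs n) = Hs (n + 1) := by
  unfold Hs
  have h : n % 3 = 0 ∨ n % 3 = 1 ∨ n % 3 = 2 := by omega
  rcases h with h | h | h
  · have h1 : (n + 1) % 3 = 1 := by omega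
    simp [h, h1, step01]
  · have h1 : (n + 1) % 3 = 2 := by omega
    simp [h, h1, step12]
  · have h1 : (n + 1) % 3 = 0 := by omega
    simp [h, h1, step20]

lemma Hs_ne (n : ℕ) : Hs (n + 1) ≠ Hs n := by
  unfold Hs
  have h : n % 3 = 0 ∨ n % 3 = 1 ∨ n % 3 = 2 := by omega
  rcases h with h | h | h
  · have h1 : (n + 1) % 3 = 1 := by omega
    simp [h, h1]
    exact fun hh => ne01 hh.symm
  · have h1 : (n + 1) % 3 = 2 := by omega
    simp [h, h1]
    exact fun hh => ne12 hh.symm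
  · have h1 : (n + 1) % 3 = 0 := by omega
    simp [h, h1]
    exact fun hh => ne20 hh.symm

/-- For every integer k > 4, there is a finite simple graph G for which no iterate of the
k-intersection polishing is ever a fixed point: P^k(G_n) ≠ G_n for every n, where G_n is
the n-fold application of P^k to G. -/
theorem stmt6 (k : ℕ) (hk : 4 < k) :
    ∃ (V : Type) (_ : Fintype V) (G : SimpleGraph V),
      ∀ n : ℕ, polish k ((polish k)^[n] G) ≠ (polish k)^[n] G := by
  have hk5 : 5 ≤ k := hk
  refine ⟨ZMod 18 ⊕ Fin (k - 5), inferInstance, joinG (k - 5) (Hs 0), ?_⟩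
  have key : ∀ n : ℕ, (polish k)^[n] (joinG (k - 5) (Hs 0)) = joinG (k - 5) (Hs n) := by
    intro n
    induction n with
    | zero => rfl
    | succ n ih =>
      rw [Function.iterate_succ_apply', ih, polish_join k hk5 (Hs n) (Hs_hdeg n), Hs_step n]
  intro n hfix
  rw [key n, polish_join k hk5 (Hs n) (Hs_hdeg n), Hs_step n] at hfix
  exact Hs_ne n (joinG_inj _ _ _ hfix)
end

section
/- Let G = (V,E) be a finite simple graph and k a positive integer such that G is k-intersection polished, i.e., P^k(G) = G. If S ⊆ V with |S| = k and K, K' are cliques of G both containing S, then K ∪ K' is a clique of G. -/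
lemma sub_closed {V : Type*} (G : SimpleGraph V) {S K : Set V} {u : V}
    (hSK : S ⊆ K) (hK : G.IsClique K) (hu : u ∈ K) : S ⊆ closedNbhd G u := by
  intro s hs
  rcases eq_or_ne s u with rfl | hne
  · exact Set.mem_insert _ _
  · exact Set.mem_insert_of_mem _ ((hK (hSK hs) hu hne).symm)

/-- If G is k-intersection polished (P^k(G) = G), S ⊆ V has |S| = k, and K, K' are cliques
of G both containing S, then K ∪ K' is a clique of G. -/
theorem stmt7 {V : Type*} [Fintype V] (G : SimpleGraph V) (k : ℕ) (hk : 0 < k)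
    (hpol : polish k G = G) (S K K' : Set V) (hS : S.ncard = k)
    (hSK : S ⊆ K) (hSK' : S ⊆ K') (hK : G.IsClique K) (hK' : G.IsClique K') :
    G.IsClique (K ∪ K') := by
  have key : ∀ u v : V, u ∈ K → v ∈ K' → u ≠ v → G.Adj u v := by
    intro u v hu hv hne
    rw [← hpol]
    refine ⟨hne, ?_⟩
    rw [← hS]
    exact Set.ncard_le_ncard
      (Set.subset_inter (sub_closed G hSK hK hu) (sub_closed G hSK' hK' hv))
      (Set.toFinite _)
  rintro u (hu | hu) v (hv | hv) hne
  · exact hK hu hv hne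
  · exact key u v hu hv hne
  · exact (key v u hv hu hne.symm).symm
  · exact hK' hu hv hne
end

section
/- For every even integer n ≥ 4, there exists a finite simple graph G with exactly n²/4 + 3n/2 vertices that is n-intersection polished (P^n(G) = G) and has at least 2^{n/2} maximal cliques. -/
set_option linter.unnecessarySimpa false


/-- A maximal clique: a clique contained in no strictly larger clique. -/
def IsMaxClique {V : Type*} (G : SimpleGraph V) (K : Set V) : Prop :=
  G.IsClique K ∧ ∀ t : Set V, G.IsClique t → K ⊆ t → K = t

/-! ### Helpers -/

lemma mem_closedNbhd {V : Type*} (G : SimpleGraph V) (u v : V) :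
    v ∈ closedNbhd G u ↔ v = u ∨ G.Adj u v := by
  simp [closedNbhd]

lemma card_le_ncard {V α : Type*} [Fintype α] [Finite V] (f : α → V)
    (hf : Function.Injective f) (s : Set V) (h : ∀ a, f a ∈ s) :
    Fintype.card α ≤ s.ncard := by
  have h1 : Set.range f ⊆ s := by rintro _ ⟨a, rfl⟩; exact h a
  have h2 : (Set.range f).ncard = Fintype.card α := by
    rw [← Set.image_univ, Set.ncard_image_of_injective _ hf, Set.ncard_univ,
      Nat.card_eq_fintype_card]
  rw [← h2]
  exact Set.ncard_le_ncard h1 (Set.toFinite s)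

lemma ncard_lt_card {V α : Type*} [Fintype α] [Finite V] (f : α → V)
    (hf : Function.Injective f) (s : Set V) (hsub : s ⊆ Set.range f)
    (a : α) (ha : f a ∉ s) : s.ncard < Fintype.card α := by
  have h2 : (Set.range f).ncard = Fintype.card α := by
    rw [← Set.image_univ, Set.ncard_image_of_injective _ hf, Set.ncard_univ,
      Nat.card_eq_fintype_card]
  rw [← h2]
  exact Set.ncard_lt_ncard ⟨hsub, fun hsup => ha (hsup ⟨a, rfl⟩)⟩ (Set.toFinite _)

/-! ### The construction -/

abbrev XY (m : ℕ) := Fin m × Bool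
abbrev Vtx (m : ℕ) := XY m ⊕ (XY m ⊕ Fin (m * m - m))

def xv {m : ℕ} (i : Fin m) (e : Bool) : Vtx m := Sum.inl (i, e)
def yv {m : ℕ} (q : XY m) : Vtx m := Sum.inr (Sum.inl q)
def zv {m : ℕ} (t : Fin (m * m - m)) : Vtx m := Sum.inr (Sum.inr t)

def wvec {m : ℕ} (q : XY m) (j : Fin m) : Bool := xor q.2 (decide (q.1 = j))

def adjB (m : ℕ) : Vtx m → Vtx m → Bool
  | Sum.inl a, Sum.inl b => a.1 != b.1
  | Sum.inl a, Sum.inr (Sum.inl q) => wvec q a.1 == a.2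
  | Sum.inr (Sum.inl q), Sum.inl a => wvec q a.1 == a.2
  | Sum.inr (Sum.inl _), Sum.inr (Sum.inl _) => true
  | _, _ => false

def Gm (m : ℕ) : SimpleGraph (Vtx m) where
  Adj u v := u ≠ v ∧ adjB m u v = true
  symm := by
    constructor
    rintro (a | q | t) (b | r | s) ⟨h1, h2⟩ <;>
      exact ⟨Ne.symm h1, by simpa [adjB, Bool.beq_comm, bne] using h2⟩
  loopless := by constructor; rintro v ⟨h, -⟩; exact h rfl

variable {m : ℕ}

lemma adj_xx {i j : Fin m} {e d : Bool} : (Gm m).Adj (xv i e) (xv j d) ↔ i ≠ j := by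
  constructor
  · rintro ⟨h1, h2⟩
    simpa [adjB, xv] using h2
  · intro h
    exact ⟨by simp [xv, h], by simpa [adjB, xv] using h⟩

lemma adj_xy {i : Fin m} {e : Bool} {q : XY m} :
    (Gm m).Adj (xv i e) (yv q) ↔ wvec q i = e := by
  simp [Gm, adjB, xv, yv]

lemma adj_yx {i : Fin m} {e : Bool} {q : XY m} :
    (Gm m).Adj (yv q) (xv i e) ↔ wvec q i = e := by
  simp [Gm, adjB, xv, yv]

lemma adj_yy {q r : XY m} : (Gm m).Adj (yv q) (yv r) ↔ q ≠ r := by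
  constructor
  · rintro ⟨h1, -⟩
    simp only [yv, ne_eq, Sum.inr.injEq, Sum.inl.injEq] at h1
    exact h1
  · intro h
    exact ⟨by simp [yv, h], by simp [adjB, yv]⟩

lemma adj_zr {u : Vtx m} {t : Fin (m * m - m)} : ¬ (Gm m).Adj u (zv t) := by
  rintro ⟨h1, h2⟩
  rcases u with a | q | s <;> simp [adjB, zv] at h2

lemma adj_zl {u : Vtx m} {t : Fin (m * m - m)} : ¬ (Gm m).Adj (zv t) u :=
  fun h => adj_zr h.symm

def fiberEquiv (i : Fin m) (e : Bool) : {q : XY m // wvec q i = e} ≃ Fin m where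
  toFun s := s.1.1
  invFun k := ⟨(k, xor e (decide (k = i))), by
    simp only [wvec]
    cases h : decide (k = i) <;> simp_all⟩
  left_inv := by
    rintro ⟨⟨k, b⟩, h⟩
    simp only [wvec] at h
    subst h
    ext
    · rfl
    · simp [Bool.xor_assoc]
  right_inv := fun k => rfl

lemma fiber_card (i : Fin m) (e : Bool) :
    Fintype.card {q : XY m // wvec q i = e} = m := by
  rw [Fintype.card_congr (fiberEquiv i e), Fintype.card_fin]

lemma wvec_eval {i j : Fin m} {b : Bool} : wvec (i, b) j = xor b (decide (i = j)) := rfl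

lemma exists_pattern (hm : 6 ≤ m) (i j : Fin m) (hij : i ≠ j) (e d : Bool) :
    ∃ q1 q2 : XY m, q1 ≠ q2 ∧ wvec q1 i = e ∧ wvec q1 j = d ∧
      wvec q2 i = e ∧ wvec q2 j = d := by
  have hcard : 1 < (Finset.univ \ {i, j} : Finset (Fin m)).card := by
    have h1 : ({i, j} : Finset (Fin m)).card ≤ 2 := Finset.card_insert_le _ _ |>.trans (by simp)
    have h2 := Finset.card_sdiff_add_card_eq_card (Finset.subset_univ ({i, j} : Finset (Fin m)))
    have h3 : (Finset.univ : Finset (Fin m)).card = m := by simp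
    omega
  obtain ⟨k1, hk1, k2, hk2, hk12⟩ := Finset.one_lt_card.1 hcard
  simp only [Finset.mem_sdiff, Finset.mem_insert, Finset.mem_singleton, not_or] at hk1 hk2
  cases e <;> cases d
  · exact ⟨(k1, false), (k2, false), by simp [hk12],
      by simp [wvec_eval, hk1.2.1], by simp [wvec_eval, hk1.2.2],
      by simp [wvec_eval, hk2.2.1], by simp [wvec_eval, hk2.2.2]⟩
  · exact ⟨(j, false), (i, true), by simp,
      by simp [wvec_eval, (Ne.symm hij)], by simp [wvec_eval],
      by simp [wvec_eval], by simp [wvec_eval, hij]⟩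
  · exact ⟨(i, false), (j, true), by simp,
      by simp [wvec_eval], by simp [wvec_eval, hij],
      by simp [wvec_eval, Ne.symm hij], by simp [wvec_eval]⟩
  · exact ⟨(k1, true), (k2, true), by simp [hk12],
      by simp [wvec_eval, hk1.2.1], by simp [wvec_eval, hk1.2.2],
      by simp [wvec_eval, hk2.2.1], by simp [wvec_eval, hk2.2.2]⟩

lemma card_XY : Fintype.card (XY m) = 2 * m := by simp [mul_comm]

lemma lowerA (hm : 6 ≤ m) (i j : Fin m) (hij : i ≠ j) (e d : Bool) :
    2 * m ≤ (closedNbhd (Gm m) (xv i e) ∩ closedNbhd (Gm m) (xv j d)).ncard := by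
  obtain ⟨q1, q2, hq, h1i, h1j, h2i, h2j⟩ := exists_pattern hm i j hij e d
  set f : XY m → Vtx m := fun p =>
    if p.1 = i then (bif p.2 then xv i e else yv q1)
    else if p.1 = j then (bif p.2 then xv j d else yv q2)
    else xv p.1 p.2 with hf
  have hfinj : Function.Injective f := by
    rintro ⟨k, γ⟩ ⟨k', γ'⟩ h
    simp only [hf] at h
    split_ifs at h <;> cases γ <;> cases γ' <;>
      simp_all [xv, yv, Prod.ext_iff]
  have hmem : ∀ p, f p ∈ closedNbhd (Gm m) (xv i e) ∩ closedNbhd (Gm m) (xv j d) := by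
    rintro ⟨k, γ⟩
    simp only [hf]
    rw [Set.mem_inter_iff, mem_closedNbhd, mem_closedNbhd]
    split_ifs with hki hkj
    · cases γ
      · exact ⟨Or.inr (adj_xy.2 h1i), Or.inr (adj_xy.2 h1j)⟩
      · exact ⟨Or.inl (by simp [hki]), Or.inr (by subst hki; exact adj_xx.2 (Ne.symm hij))⟩
    · cases γ
      · exact ⟨Or.inr (adj_xy.2 h2i), Or.inr (adj_xy.2 h2j)⟩
      · exact ⟨Or.inr (by subst hkj; exact adj_xx.2 hij), Or.inl (by simp [hkj])⟩
    · exact ⟨Or.inr (adj_xx.2 (Ne.symm hki)), Or.inr (adj_xx.2 (Ne.symm hkj))⟩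
  calc 2 * m = Fintype.card (XY m) := card_XY.symm
    _ ≤ _ := card_le_ncard f hfinj _ hmem

lemma lowerB (p : XY m) (i : Fin m) (e : Bool) (hpe : wvec p i = e) :
    2 * m ≤ (closedNbhd (Gm m) (yv p) ∩ closedNbhd (Gm m) (xv i e)).ncard := by
  set f : Fin m ⊕ {q : XY m // wvec q i = e} → Vtx m :=
    Sum.elim (fun j => xv j (wvec p j)) (fun q => yv q.1) with hf
  have hfinj : Function.Injective f := by
    rintro (j | q) (j' | q') h <;> simp_all [hf, xv, yv, Subtype.ext_iff]
  have hmem : ∀ a, f a ∈ closedNbhd (Gm m) (yv p) ∩ closedNbhd (Gm m) (xv i e) := by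
    rintro (j | q)
    · rw [Set.mem_inter_iff, mem_closedNbhd, mem_closedNbhd]
      refine ⟨Or.inr (adj_yx.2 rfl), ?_⟩
      rcases eq_or_ne j i with rfl | hji
      · exact Or.inl (by simp only [hf, Sum.elim_inl]; rw [hpe])
      · exact Or.inr (adj_xx.2 (Ne.symm hji))
    · rw [Set.mem_inter_iff, mem_closedNbhd, mem_closedNbhd]
      refine ⟨?_, Or.inr (adj_xy.2 q.2)⟩
      rcases eq_or_ne q.1 p with hqp | hqp
      · exact Or.inl (by simp only [hf, Sum.elim_inr]; rw [hqp])
      · exact Or.inr (adj_yy.2 (Ne.symm hqp))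
  calc 2 * m = Fintype.card (Fin m ⊕ {q : XY m // wvec q i = e}) := by
        rw [Fintype.card_sum, Fintype.card_fin, fiber_card]; omega
    _ ≤ _ := card_le_ncard f hfinj _ hmem

lemma lowerC (p r : XY m) :
    2 * m ≤ (closedNbhd (Gm m) (yv p) ∩ closedNbhd (Gm m) (yv r)).ncard := by
  have hmem : ∀ q : XY m, yv q ∈ closedNbhd (Gm m) (yv p) ∩ closedNbhd (Gm m) (yv r) := by
    intro q
    rw [Set.mem_inter_iff, mem_closedNbhd, mem_closedNbhd]
    constructor
    · rcases eq_or_ne q p with rfl | h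
      · exact Or.inl rfl
      · exact Or.inr (adj_yy.2 (Ne.symm h))
    · rcases eq_or_ne q r with rfl | h
      · exact Or.inl rfl
      · exact Or.inr (adj_yy.2 (Ne.symm h))
  have hinj : Function.Injective (yv (m := m)) := by
    intro a b h; simpa [yv] using h
  calc 2 * m = Fintype.card (XY m) := card_XY.symm
    _ ≤ _ := card_le_ncard _ hinj _ hmem

lemma upperXX (i : Fin m) (e d : Bool) (hed : e ≠ d) :
    (closedNbhd (Gm m) (xv i e) ∩ closedNbhd (Gm m) (xv i d)).ncard < 2 * m := by
  have h := ncard_lt_card (fun p : XY m => xv p.1 p.2)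
    (by intro a b hab; simpa [xv, Prod.ext_iff] using hab)
    (closedNbhd (Gm m) (xv i e) ∩ closedNbhd (Gm m) (xv i d))
    (by
      rintro (a | q | t) ⟨h1, h2⟩
      · exact ⟨a, rfl⟩
      · rw [mem_closedNbhd] at h1 h2
        rcases h1 with h1 | h1
        · simp [yv, xv] at h1
        · rcases h2 with h2 | h2
          · simp [yv, xv] at h2
          · change (Gm m).Adj (xv i e) (yv q) at h1
            change (Gm m).Adj (xv i d) (yv q) at h2
            rw [adj_xy] at h1 h2
            exact absurd (h1.symm.trans h2) hed
      · rw [mem_closedNbhd] at h1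
        rcases h1 with h1 | h1
        · simp [zv, xv] at h1
        · exact absurd h1 adj_zr)
    (i, e)
    (by
      rw [Set.mem_inter_iff, mem_closedNbhd, mem_closedNbhd]
      rintro ⟨-, h2 | h2⟩
      · exact hed (by simpa [xv, Prod.ext_iff] using h2)
      · exact (adj_xx.1 h2) rfl)
  rwa [card_XY] at h

lemma upperXY (p : XY m) (i : Fin m) (e : Bool) (hpe : wvec p i ≠ e) :
    (closedNbhd (Gm m) (yv p) ∩ closedNbhd (Gm m) (xv i e)).ncard < 2 * m := by
  set f : Fin m ⊕ {q : XY m // wvec q i = e} → Vtx m :=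
    Sum.elim (fun j => xv j (wvec p j)) (fun q => yv q.1) with hf
  have hfinj : Function.Injective f := by
    rintro (j | q) (j' | q') h <;> simp_all [hf, xv, yv, Subtype.ext_iff]
  have h := ncard_lt_card f hfinj
    (closedNbhd (Gm m) (yv p) ∩ closedNbhd (Gm m) (xv i e))
    (by
      rintro (a | q | t) ⟨h1, h2⟩
      · rw [mem_closedNbhd] at h1
        rcases h1 with h1 | h1
        · simp [yv, xv] at h1
        · change (Gm m).Adj (yv p) (xv a.1 a.2) at h1
          rw [adj_yx] at h1
          exact ⟨Sum.inl a.1, by simp [hf, h1, xv]⟩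
      · rw [mem_closedNbhd] at h2
        rcases h2 with h2 | h2
        · simp [yv, xv] at h2
        · change (Gm m).Adj (xv i e) (yv q) at h2
          rw [adj_xy] at h2
          exact ⟨Sum.inr ⟨q, h2⟩, by simp [hf, yv]⟩
      · rw [mem_closedNbhd] at h2
        rcases h2 with h2 | h2
        · simp [zv, xv] at h2
        · exact absurd h2 adj_zr)
    (Sum.inl i)
    (by
      rw [Set.mem_inter_iff, mem_closedNbhd, mem_closedNbhd]
      rintro ⟨-, h2 | h2⟩
      · exact hpe (by simpa [hf, xv, Prod.ext_iff] using h2)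
      · simp only [hf, Sum.elim_inl] at h2
        exact (adj_xx.1 h2) rfl)
  rwa [Fintype.card_sum, Fintype.card_fin, fiber_card, ← two_mul] at h

lemma upperZ (t : Fin (m * m - m)) (v : Vtx m) (hv : v ≠ zv t) :
    (closedNbhd (Gm m) (zv t) ∩ closedNbhd (Gm m) v).ncard = 0 := by
  have : (closedNbhd (Gm m) (zv t) ∩ closedNbhd (Gm m) v) = ∅ := by
    ext w
    simp only [Set.mem_inter_iff, mem_closedNbhd, Set.mem_empty_iff_false, iff_false, not_and]
    rintro (rfl | h1)
    · rintro (h2 | h2)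
      · exact hv h2.symm
      · exact adj_zr h2
    · exact absurd h1 adj_zl
  rw [this, Set.ncard_empty]

lemma polish_Gm (hm : 6 ≤ m) : polish (2 * m) (Gm m) = Gm m := by
  have L1 : ∀ u v : Vtx m, (Gm m).Adj u v →
      2 * m ≤ (closedNbhd (Gm m) u ∩ closedNbhd (Gm m) v).ncard := by
    rintro (⟨i, e⟩ | q | t) (⟨j, d⟩ | r | s) h
    · exact lowerA hm i j (adj_xx.1 h) e d
    · rw [Set.inter_comm]
      exact lowerB r i e (adj_xy.1 h)
    · exact absurd h adj_zr
    · exact lowerB q j d (adj_yx.1 h)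
    · exact lowerC q r
    · exact absurd h adj_zr
    · exact absurd h adj_zl
    · exact absurd h adj_zl
    · exact absurd h adj_zl
  have L2 : ∀ u v : Vtx m, u ≠ v → ¬ (Gm m).Adj u v →
      (closedNbhd (Gm m) u ∩ closedNbhd (Gm m) v).ncard < 2 * m := by
    rintro (⟨i, e⟩ | q | t) (⟨j, d⟩ | r | s) hne h
    · have hij : i = j := by
        by_contra hij
        exact h (adj_xx.2 hij)
      subst hij
      have hed : e ≠ d := by
        intro hed; exact hne (by rw [hed])
      exact upperXX i e d hed
    · rw [Set.inter_comm]
      exact upperXY r i e (fun hw => h (adj_xy.2 hw))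
    · rw [Set.inter_comm]
      have : (closedNbhd (Gm m) (zv s) ∩ closedNbhd (Gm m) (xv i e)).ncard = 0 :=
        upperZ s _ (by simp [zv, xv])
      show (closedNbhd (Gm m) (zv s) ∩ closedNbhd (Gm m) (xv i e)).ncard < 2 * m
      omega
    · exact upperXY q j d (fun hw => h (adj_yx.2 hw))
    · exact absurd (adj_yy.2 (by simpa [yv] using hne)) h
    · rw [Set.inter_comm]
      have : (closedNbhd (Gm m) (zv s) ∩ closedNbhd (Gm m) (yv q)).ncard = 0 :=
        upperZ s _ (by simp [zv, yv])
      show (closedNbhd (Gm m) (zv s) ∩ closedNbhd (Gm m) (yv q)).ncard < 2 * m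
      omega
    · have : (closedNbhd (Gm m) (zv t) ∩ closedNbhd (Gm m) (xv j d)).ncard = 0 :=
        upperZ t _ (by simp [zv, xv])
      show (closedNbhd (Gm m) (zv t) ∩ closedNbhd (Gm m) (xv j d)).ncard < 2 * m
      omega
    · have : (closedNbhd (Gm m) (zv t) ∩ closedNbhd (Gm m) (yv r)).ncard = 0 :=
        upperZ t _ (by simp [zv, yv])
      show (closedNbhd (Gm m) (zv t) ∩ closedNbhd (Gm m) (yv r)).ncard < 2 * m
      omega
    · have : (closedNbhd (Gm m) (zv t) ∩ closedNbhd (Gm m) (zv s)).ncard = 0 :=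
        upperZ t _ (by simpa [zv] using hne.symm)
      show (closedNbhd (Gm m) (zv t) ∩ closedNbhd (Gm m) (zv s)).ncard < 2 * m
      omega
  ext u v
  show (u ≠ v ∧ 2 * m ≤ (closedNbhd (Gm m) u ∩ closedNbhd (Gm m) v).ncard) ↔ (Gm m).Adj u v
  constructor
  · rintro ⟨hne, hcard⟩
    by_contra hadj
    exact absurd hcard (not_le.2 (L2 u v hne hadj))
  · intro h
    exact ⟨h.ne, L1 u v h⟩

def Kw (m : ℕ) (w : Fin m → Bool) : Set (Vtx m) :=
  {v | (∃ i, v = xv i (w i)) ∨ (∃ q : XY m, v = yv q ∧ ∀ i, wvec q i = w i)}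

lemma Kw_maxclique (hm : 1 ≤ m) (w : Fin m → Bool) : IsMaxClique (Gm m) (Kw m w) := by
  constructor
  · rintro u (⟨i, rfl⟩ | ⟨q, rfl, hq⟩) v (⟨j, rfl⟩ | ⟨r, rfl, hr⟩) huv
    · refine adj_xx.2 fun hij => huv ?_
      rw [hij]
    · exact adj_xy.2 (hr i)
    · exact adj_yx.2 (hq j)
    · exact adj_yy.2 (by simpa [yv] using huv)
  · intro t ht hsub
    refine Set.Subset.antisymm hsub ?_
    rintro (⟨i, e⟩ | q | s) hv
    · have hx : xv i (w i) ∈ t := hsub (Or.inl ⟨i, rfl⟩)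
      rcases eq_or_ne (xv i (w i)) (Sum.inl (i, e)) with heq | hne
      · rw [← heq]; exact Or.inl ⟨i, rfl⟩
      · have := ht hx hv hne
        change (Gm m).Adj (xv i (w i)) (xv i e) at this
        exact absurd rfl (adj_xx.1 this)
    · refine Or.inr ⟨q, rfl, fun i => ?_⟩
      have hx : xv i (w i) ∈ t := hsub (Or.inl ⟨i, rfl⟩)
      have hne : xv i (w i) ≠ Sum.inr (Sum.inl q) := by simp [xv]
      have := ht hx hv hne
      change (Gm m).Adj (xv i (w i)) (yv q) at this
      exact adj_xy.1 this
    · exfalso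
      have hx : xv ⟨0, hm⟩ (w ⟨0, hm⟩) ∈ t := hsub (Or.inl ⟨⟨0, hm⟩, rfl⟩)
      have hne : xv ⟨0, hm⟩ (w ⟨0, hm⟩) ≠ Sum.inr (Sum.inr s) := by simp [xv]
      have := ht hx hv hne
      change (Gm m).Adj (xv ⟨0, hm⟩ (w ⟨0, hm⟩)) (zv s) at this
      exact adj_zr this

lemma Kw_inj (m : ℕ) : Function.Injective (Kw m) := by
  intro w w' h
  funext i
  have hx : xv i (w i) ∈ Kw m w' := h ▸ Or.inl ⟨i, rfl⟩
  rcases hx with ⟨j, hj⟩ | ⟨q, hq, -⟩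
  · rw [xv, xv, Sum.inl.injEq, Prod.mk.injEq] at hj
    rw [hj.2, hj.1]
  · simp [xv, yv] at hq

lemma cliques_lower (hm : 1 ≤ m) :
    2 ^ m ≤ {K : Set (Vtx m) | IsMaxClique (Gm m) K}.ncard := by
  have h := card_le_ncard (Kw m) (Kw_inj m)
    {K : Set (Vtx m) | IsMaxClique (Gm m) K} (fun w => Kw_maxclique hm w)
  simpa using h

lemma polish_bot {N n : ℕ} (hn : 1 ≤ n) : polish n (⊥ : SimpleGraph (Fin N)) = ⊥ := by
  ext u v
  show (u ≠ v ∧ n ≤ (closedNbhd ⊥ u ∩ closedNbhd ⊥ v).ncard) ↔ (⊥ : SimpleGraph (Fin N)).Adj u v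
  simp only [SimpleGraph.bot_adj, iff_false, not_and, not_le]
  intro hne
  have hempty : closedNbhd (⊥ : SimpleGraph (Fin N)) u ∩ closedNbhd ⊥ v = ∅ := by
    ext w
    simp only [Set.mem_inter_iff, mem_closedNbhd, SimpleGraph.bot_adj, or_false,
      Set.mem_empty_iff_false, iff_false, not_and]
    rintro rfl rfl
    exact hne rfl
  rw [hempty, Set.ncard_empty]
  omega

lemma bot_cliques (N : ℕ) :
    N ≤ {K : Set (Fin N) | IsMaxClique (⊥ : SimpleGraph (Fin N)) K}.ncard := by
  have h := card_le_ncard (fun v : Fin N => ({v} : Set (Fin N)))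
    (fun a b hab => by simpa using hab)
    {K : Set (Fin N) | IsMaxClique (⊥ : SimpleGraph (Fin N)) K}
    (fun v => by
      constructor
      · exact Set.pairwise_singleton v _
      · intro t ht hsub
        refine Set.Subset.antisymm hsub fun w hw => ?_
        rcases eq_or_ne w v with rfl | hne
        · exact rfl
        · exact absurd (ht hw (hsub rfl) hne) (by simp))
  simpa using h

/-- For every even n ≥ 4 there is an n-intersection polished graph with exactly
n²/4 + 3n/2 vertices having at least 2^(n/2) maximal cliques. -/
theorem stmt10 (n : ℕ) (hn : 4 ≤ n) (heven : Even n) :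
    ∃ (V : Type) (inst : Fintype V) (G : SimpleGraph V),
      @Fintype.card V inst = n ^ 2 / 4 + 3 * n / 2 ∧
      polish n G = G ∧
      2 ^ (n / 2) ≤ {K : Set V | IsMaxClique G K}.ncard := by
  obtain ⟨m, hm⟩ := heven
  have hnm : n = 2 * m := by omega
  have hm2 : 2 ≤ m := by omega
  have hsq : n ^ 2 / 4 = m * m := by
    have : n ^ 2 = m * m * 4 := by rw [hnm]; ring
    rw [this, Nat.mul_div_cancel _ (by norm_num)]
  have hhalf : 3 * n / 2 = 3 * m := by omega
  have hn2 : n / 2 = m := by omega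
  by_cases hsmall : 2 ^ m ≤ m * m + 3 * m
  · refine ⟨Fin (n ^ 2 / 4 + 3 * n / 2), inferInstance, ⊥, by simp, polish_bot (by omega), ?_⟩
    calc 2 ^ (n / 2) = 2 ^ m := by rw [hn2]
      _ ≤ m * m + 3 * m := hsmall
      _ = n ^ 2 / 4 + 3 * n / 2 := by omega
      _ ≤ _ := bot_cliques _
  · have hm6 : 6 ≤ m := by
      by_contra hlt
      refine hsmall ?_
      interval_cases m <;> norm_num
    refine ⟨Vtx m, inferInstance, Gm m, ?_, by rw [hnm]; exact polish_Gm hm6, ?_⟩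
    · have hcard : Fintype.card (Vtx m) = 2 * m + (2 * m + (m * m - m)) := by
        simp [mul_comm]
      have hmm : m ≤ m * m := Nat.le_mul_of_pos_left m (by omega)
      omega
    · rw [hn2]
      exact cliques_lower (by omega)
end

section
/- Let G be a finite simple graph with vertices ordered v_1,…,v_n (n ≥ 1), and let c > 0, α > 0, β ≥ 0, and Δ > 1/2 be real numbers. If |N[v_i]| ≤ max(cα / i^{Δ}, β) for every i = 1,…,n, then ∑_{i=1}^{n} |N[v_i]|² ≤ c²α² · (2Δ)/(2Δ − 1) + β² n. -/
open Real

lemma key_step (s : ℝ) (hs : 1 < s) (n : ℕ) (hn : 1 ≤ n) :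
    (s - 1) * ((n : ℝ) + 1) ^ (-s) ≤ (n : ℝ) ^ (1 - s) - ((n : ℝ) + 1) ^ (1 - s) := by
  have hn0 : (0 : ℝ) < n := by exact_mod_cast hn
  have hzero : (0 : ℝ) ∉ Set.uIcc (n : ℝ) ((n : ℝ) + 1) := by
    rw [Set.uIcc_of_le (by linarith)]
    intro h
    exact absurd h.1 (by linarith)
  have hint : ∫ x in (n : ℝ)..((n : ℝ) + 1), x ^ (-s) =
      (((n : ℝ) + 1) ^ (-s + 1) - (n : ℝ) ^ (-s + 1)) / (-s + 1) := by
    exact integral_rpow (Or.inr ⟨by intro h; linarith [neg_eq_iff_eq_neg.mp h], hzero⟩)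
  have hmono : ∫ x in (n : ℝ)..((n : ℝ) + 1), ((n : ℝ) + 1) ^ (-s) ≤
      ∫ x in (n : ℝ)..((n : ℝ) + 1), x ^ (-s) := by
    apply intervalIntegral.integral_mono_on (by linarith)
    · exact intervalIntegrable_const
    · exact intervalIntegral.intervalIntegrable_rpow (Or.inr hzero)
    · intro x hx
      exact rpow_le_rpow_of_nonpos (by linarith [hx.1]) hx.2 (by linarith)
  rw [intervalIntegral.integral_const, smul_eq_mul] at hmono
  rw [hint] at hmono
  have hs1 : -s + 1 < 0 := by linarith
  have : ((n : ℝ) + 1) ^ (-s) ≤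
      (((n : ℝ) + 1) ^ (-s + 1) - (n : ℝ) ^ (-s + 1)) / (-s + 1) := by
    simpa using hmono
  have h2 := mul_le_mul_of_nonneg_left this (by linarith : (0:ℝ) ≤ s - 1)
  calc (s - 1) * ((n : ℝ) + 1) ^ (-s)
      ≤ (s - 1) * ((((n : ℝ) + 1) ^ (-s + 1) - (n : ℝ) ^ (-s + 1)) / (-s + 1)) := h2
    _ = (n : ℝ) ^ (1 - s) - ((n : ℝ) + 1) ^ (1 - s) := by
        have h4 : -s + 1 = 1 - s := by ring
        have hne : (1 - s) ≠ 0 := by linarith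
        rw [h4, mul_div_assoc']
        rw [eq_comm, eq_div_iff hne]
        ring

lemma sum_rpow_bound (s : ℝ) (hs : 1 < s) (n : ℕ) :
    ∑ i ∈ Finset.range n, ((i : ℝ) + 1) ^ (-s) ≤ s / (s - 1) - (n : ℝ) ^ (1 - s) / (s - 1)
      ∨ n = 0 := by
  induction n with
  | zero => right; rfl
  | succ m ih =>
    left
    rcases Nat.eq_zero_or_pos m with rfl | hm
    · simp only [Nat.cast_one, Finset.sum_range_one, Nat.cast_zero, zero_add, Real.one_rpow]
      rw [div_sub_div_same, div_self (by linarith : s - 1 ≠ 0)]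
    · have ih' := ih.resolve_right (by omega)
      rw [Finset.sum_range_succ]
      have hk := key_step s hs m hm
      have hdiv : ((m : ℝ) + 1) ^ (-s) ≤
          ((m : ℝ) ^ (1 - s) - ((m : ℝ) + 1) ^ (1 - s)) / (s - 1) := by
        rw [le_div_iff₀ (by linarith)]
        linarith [hk]
      have hc1 : ((m + 1 : ℕ) : ℝ) = (m : ℝ) + 1 := by push_cast; ring
      rw [hc1]
      have hsub : ((m:ℝ) ^ (1 - s) - ((m:ℝ) + 1) ^ (1 - s)) / (s - 1)
          = (m:ℝ) ^ (1 - s) / (s - 1) - ((m:ℝ) + 1) ^ (1 - s) / (s - 1) := by ring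
      linarith [hdiv, hsub ▸ hdiv]

/-- If Δ > 1/2 and the vertices v_1, …, v_n of G satisfy |N[v_i]| ≤ max(cα/i^Δ, β), then
∑_i |N[v_i]|² ≤ c²α² · 2Δ/(2Δ−1) + β²n.  (Vertex i is represented by `i : Fin n`,
standing for the (i+1)-st vertex; `^` is the real power.) -/
theorem stmt15 (n : ℕ) (hn : 1 ≤ n) (G : SimpleGraph (Fin n))
    (c α β Δ : ℝ) (hc : 0 < c) (hα : 0 < α) (hβ : 0 ≤ β) (hΔ : 1 / 2 < Δ)
    (hdeg : ∀ i : Fin n,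
      ((closedNbhd G i).ncard : ℝ) ≤ max (c * α / (((i : ℕ) + 1 : ℝ) ^ Δ)) β) :
    ∑ i : Fin n, ((closedNbhd G i).ncard : ℝ) ^ 2 ≤
      c ^ 2 * α ^ 2 * (2 * Δ) / (2 * Δ - 1) + β ^ 2 * n := by
  set s : ℝ := 2 * Δ with hsdef
  have hs : 1 < s := by simp only [hsdef]; linarith
  -- pointwise bound
  have hpt : ∀ i : Fin n, ((closedNbhd G i).ncard : ℝ) ^ 2 ≤
      c ^ 2 * α ^ 2 * (((i : ℕ) : ℝ) + 1) ^ (-s) + β ^ 2 := by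
    intro i
    have hpos : (0 : ℝ) < (((i : ℕ) : ℝ) + 1) ^ Δ :=
      Real.rpow_pos_of_pos (by positivity) _
    have hN : (0 : ℝ) ≤ ((closedNbhd G i).ncard : ℝ) := by positivity
    have h1 : ((closedNbhd G i).ncard : ℝ) ^ 2 ≤
        (max (c * α / (((i : ℕ) + 1 : ℝ) ^ Δ)) β) ^ 2 :=
      pow_le_pow_left₀ hN (hdeg i) 2
    have hmaxsq : (max (c * α / (((i : ℕ) + 1 : ℝ) ^ Δ)) β) ^ 2 ≤
        (c * α / (((i : ℕ) + 1 : ℝ) ^ Δ)) ^ 2 + β ^ 2 := by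
      rcases max_cases (c * α / (((i : ℕ) + 1 : ℝ) ^ Δ)) β with ⟨h, _⟩ | ⟨h, _⟩ <;>
        rw [h] <;> nlinarith [sq_nonneg β, sq_nonneg (c * α / (((i : ℕ) + 1 : ℝ) ^ Δ))]
    have heq : (c * α / (((i : ℕ) + 1 : ℝ) ^ Δ)) ^ 2 =
        c ^ 2 * α ^ 2 * (((i : ℕ) : ℝ) + 1) ^ (-s) := by
      rw [div_pow, mul_pow, ← Real.rpow_natCast ((((i : ℕ) : ℝ) + 1) ^ Δ) 2,
        ← Real.rpow_mul (by positivity)]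
      rw [Real.rpow_neg (by positivity), hsdef]
      norm_num
      ring_nf
    linarith [heq ▸ hmaxsq]
  calc ∑ i : Fin n, ((closedNbhd G i).ncard : ℝ) ^ 2
      ≤ ∑ i : Fin n, (c ^ 2 * α ^ 2 * (((i : ℕ) : ℝ) + 1) ^ (-s) + β ^ 2) :=
        Finset.sum_le_sum fun i _ => hpt i
    _ = c ^ 2 * α ^ 2 * (∑ i ∈ Finset.range n, ((i : ℝ) + 1) ^ (-s)) + β ^ 2 * n := by
        rw [Finset.sum_add_distrib, ← Finset.mul_sum]
        simp [Finset.sum_range, mul_comm]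
    _ ≤ c ^ 2 * α ^ 2 * (s / (s - 1)) + β ^ 2 * n := by
        have hb : ∑ i ∈ Finset.range n, ((i : ℝ) + 1) ^ (-s) ≤ s / (s - 1) := by
          rcases sum_rpow_bound s hs n with h | h
          · have : (0:ℝ) ≤ (n : ℝ) ^ (1 - s) / (s - 1) :=
              div_nonneg (Real.rpow_nonneg n.cast_nonneg _) (by linarith)
            linarith
          · omega
        nlinarith [sq_nonneg (c * α), mul_pos hc hα]
    _ = c ^ 2 * α ^ 2 * (2 * Δ) / (2 * Δ - 1) + β ^ 2 * n := by
        rw [hsdef]; ring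
end
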